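/- arXiv:2508.14169 — 3 statements merged into one kernel-verified Lean document; each statement's English description precedes it below -/
import Mathlib

section
/- Let n > m > ℓ ≥ 2 be integers, and let G and H be the groups given by the presentations G = ⟨x, y, z | x^(2^n) = 1, y^(2^m) = 1, z^(2^ℓ) = 1, [y,x] = z, [z,x] = z^(-2), [z,y] = z^(-2)⟩ and H = ⟨a, b, c | a^(2^n) = 1, b^(2^m) = a^(2^m), c^(2^ℓ) = 1, [b,a] = c, [c,a] = c^(-2), [c,b] = c^(-2)⟩. Then the complex group algebras ℂG and ℂH are isomorphic as ℂ-algebras. -/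
/-- Relators of the group `G` from the paper:
`G = ⟨x,y,z ∣ x^(2^n) = y^(2^m) = z^(2^l) = 1, [y,x] = z, [z,x] = z⁻², [z,y] = z⁻²⟩`,
where `[g,h] = g⁻¹h⁻¹gh`.  Generators: `0 ↦ x`, `1 ↦ y`, `2 ↦ z`. -/
def grels (n m l : ℕ) : Set (FreeGroup (Fin 3)) :=
  {FreeGroup.of 0 ^ 2 ^ n, FreeGroup.of 1 ^ 2 ^ m, FreeGroup.of 2 ^ 2 ^ l,
   (FreeGroup.of 1)⁻¹ * (FreeGroup.of 0)⁻¹ * FreeGroup.of 1 * FreeGroup.of 0 * (FreeGroup.of 2)⁻¹,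
   (FreeGroup.of 2)⁻¹ * (FreeGroup.of 0)⁻¹ * FreeGroup.of 2 * FreeGroup.of 0 * FreeGroup.of 2 ^ 2,
   (FreeGroup.of 2)⁻¹ * (FreeGroup.of 1)⁻¹ * FreeGroup.of 2 * FreeGroup.of 1 * FreeGroup.of 2 ^ 2}

/-- Relators of the group `H` from the paper:
`H = ⟨a,b,c ∣ a^(2^n) = 1, b^(2^m) = a^(2^m), c^(2^l) = 1, [b,a] = c, [c,a] = c⁻², [c,b] = c⁻²⟩`.
Generators: `0 ↦ a`, `1 ↦ b`, `2 ↦ c`. -/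
def hrels (n m l : ℕ) : Set (FreeGroup (Fin 3)) :=
  {FreeGroup.of 0 ^ 2 ^ n, FreeGroup.of 1 ^ 2 ^ m * (FreeGroup.of 0 ^ 2 ^ m)⁻¹,
   FreeGroup.of 2 ^ 2 ^ l,
   (FreeGroup.of 1)⁻¹ * (FreeGroup.of 0)⁻¹ * FreeGroup.of 1 * FreeGroup.of 0 * (FreeGroup.of 2)⁻¹,
   (FreeGroup.of 2)⁻¹ * (FreeGroup.of 0)⁻¹ * FreeGroup.of 2 * FreeGroup.of 0 * FreeGroup.of 2 ^ 2,
   (FreeGroup.of 2)⁻¹ * (FreeGroup.of 1)⁻¹ * FreeGroup.of 2 * FreeGroup.of 1 * FreeGroup.of 2 ^ 2}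

/-- The group `G` of the paper. -/
def GrpG (n m l : ℕ) : Type := PresentedGroup (grels n m l)
/-- The group `H` of the paper. -/
def GrpH (n m l : ℕ) : Type := PresentedGroup (hrels n m l)

instance (n m l : ℕ) : Group (GrpG n m l) := by unfold GrpG; infer_instance
instance (n m l : ℕ) : Group (GrpH n m l) := by unfold GrpH; infer_instance

/-!
In both groups `a²` commutes with `b` and `c`, so `t = a^(2^m)` is central, and `t^(2^n) = 1`.
Since `t` has finite order, `ℂH` splits along the spectral idempotents of `t`, and the sum of these
idempotents weighted by `2^m`-th roots of the eigenvalues is a unit `s` with `s^(2^m) = t`; being a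
polynomial in `t`, it is central. Replacing `b` by `b s⁻¹` turns the relation `b^(2^m) = a^(2^m)`
into `b^(2^m) = 1` without affecting the commutator relations, which gives `ℂG → ℂH`. The same
construction in `ℂG`, with `y ↦ y s`, gives the inverse, because each map sends the root `s` of
one algebra to the root `s` of the other.
-/

open Finset

section SpectralDecomposition

variable {K A : Type*} [Field K] [Ring A] [Algebra K A]

lemma geom_sum_eq_zero_of_pow_eq_one {N : ℕ} {x : K} (hx : x ^ N = 1) (hx1 : x ≠ 1) :
    ∑ k ∈ range N, x ^ k = 0 := by
  rw [geom_sum_eq hx1, hx, sub_self, zero_div]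

lemma mul_geom_sum_of_pow_eq_one {N : ℕ} {s : A} (hs : s ^ N = 1) :
    s * ∑ k ∈ range N, s ^ k = ∑ k ∈ range N, s ^ k := by
  have := mul_geom_sum s N
  rwa [hs, sub_self, sub_mul, one_mul, sub_eq_zero] at this

lemma pow_mul_eq_smul_of_mul_eq_smul {t e : A} {c : K} (h : t * e = c • e) (k : ℕ) :
    t ^ k * e = c ^ k • e := by
  induction k with
  | zero => simp
  | succ k ih => rw [pow_succ', mul_assoc, ih, mul_smul_comm, h, smul_smul, pow_succ]

/-- `(ζ ^ j)⁻¹ • t` has order dividing `N`, so averaging its powers projects onto its fixed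
vectors, i.e. onto the `ζ ^ j`-eigenspace of `t`. -/
def spectralIdempotent (ζ : K) (N : ℕ) (t : A) (j : ℕ) : A :=
  (N : K)⁻¹ • ∑ k ∈ range N, ((ζ ^ j)⁻¹ • t) ^ k

def spectralSum (ζ : K) (N : ℕ) (t : A) (f : ℕ → K) : A :=
  ∑ j ∈ range N, f j • spectralIdempotent ζ N t j

variable {N : ℕ} [NeZero N] {ζ : K} {t : A}

lemma mul_spectralIdempotent (hζ : IsPrimitiveRoot ζ N) (ht : t ^ N = 1) (j : ℕ) :
    t * spectralIdempotent ζ N t j = ζ ^ j • spectralIdempotent ζ N t j := by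
  have hζj : ζ ^ j ≠ 0 := pow_ne_zero _ (hζ.ne_zero (NeZero.ne N))
  have hs : ((ζ ^ j)⁻¹ • t) ^ N = 1 := by
    rw [smul_pow, ht, inv_pow, ← pow_mul, mul_comm, pow_mul, hζ.pow_eq_one, one_pow, inv_one,
      one_smul]
  have fixed := mul_geom_sum_of_pow_eq_one hs
  rw [smul_mul_assoc] at fixed
  rw [spectralIdempotent, mul_smul_comm, smul_comm (ζ ^ j)]
  congr 1
  conv_rhs => rw [← fixed, smul_smul, mul_inv_cancel₀ hζj, one_smul]

lemma spectralIdempotent_mul_spectralIdempotent (hζ : IsPrimitiveRoot ζ N) (ht : t ^ N = 1)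
    {i j : ℕ} (hi : i < N) (hj : j < N) :
    spectralIdempotent ζ N t i * spectralIdempotent ζ N t j =
      if i = j then spectralIdempotent ζ N t j else 0 := by
  set x := (ζ ^ i)⁻¹ * ζ ^ j
  have expand : spectralIdempotent ζ N t i * spectralIdempotent ζ N t j
      = ((N : K)⁻¹ * ∑ k ∈ range N, x ^ k) • spectralIdempotent ζ N t j := by
    nth_rw 1 [spectralIdempotent]
    rw [smul_mul_assoc, sum_mul, mul_smul, sum_smul]
    congr 1
    refine sum_congr rfl fun k _ => ?_
    rw [smul_pow, smul_mul_assoc, pow_mul_eq_smul_of_mul_eq_smul (mul_spectralIdempotent hζ ht j),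
      smul_smul, ← mul_pow]
  rw [expand]
  split_ifs with h
  · have := hζ.neZero'
    simp [x, h, hζ.ne_zero (NeZero.ne N), inv_mul_cancel₀ (NeZero.ne (N : K))]
  · have hx : x ^ N = 1 := by
      rw [mul_pow, inv_pow, ← pow_mul, ← pow_mul, mul_comm i, mul_comm j, pow_mul, pow_mul,
        hζ.pow_eq_one, one_pow, one_pow, inv_one, one_mul]
    have hx1 : x ≠ 1 := by
      rw [Ne, inv_mul_eq_one₀ (pow_ne_zero _ (hζ.ne_zero (NeZero.ne N)))]
      exact fun e => h (hζ.pow_inj hi hj e)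
    rw [geom_sum_eq_zero_of_pow_eq_one hx hx1, mul_zero, zero_smul]

lemma sum_spectralIdempotent (hζ : IsPrimitiveRoot ζ N) :
    ∑ j ∈ range N, spectralIdempotent ζ N t j = 1 := by
  have inner : ∀ k ∈ range N, (∑ j ∈ range N, ((ζ ^ k)⁻¹) ^ j) • t ^ k =
      if k = 0 then (N : K) • (1 : A) else 0 := by
    intro k hk
    split_ifs with h
    · simp [h]
    · have hx : ((ζ ^ k)⁻¹) ^ N = 1 := by
        rw [inv_pow, ← pow_mul, mul_comm, pow_mul, hζ.pow_eq_one, one_pow, inv_one]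
      have hx1 : (ζ ^ k)⁻¹ ≠ 1 := by
        rw [Ne, inv_eq_one, hζ.pow_eq_one_iff_dvd]
        exact fun hd => h (Nat.eq_zero_of_dvd_of_lt hd (mem_range.1 hk))
      rw [geom_sum_eq_zero_of_pow_eq_one hx hx1, zero_smul]
  calc ∑ j ∈ range N, spectralIdempotent ζ N t j
      = (N : K)⁻¹ • ∑ k ∈ range N, (∑ j ∈ range N, ((ζ ^ k)⁻¹) ^ j) • t ^ k := by
        simp only [spectralIdempotent, ← smul_sum, sum_smul, smul_pow]
        rw [sum_comm]
        simp only [← inv_pow, ← pow_mul, mul_comm]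
    _ = 1 := by
        have := hζ.neZero'
        rw [sum_congr rfl inner, sum_ite_eq' (range N) 0, if_pos (mem_range.2 (NeZero.pos N)),
          smul_smul, inv_mul_cancel₀ (NeZero.ne (N : K)), one_smul]

lemma spectralSum_mul (hζ : IsPrimitiveRoot ζ N) (ht : t ^ N = 1) (f g : ℕ → K) :
    spectralSum ζ N t f * spectralSum ζ N t g = spectralSum ζ N t (f * g) := by
  rw [spectralSum, spectralSum, sum_mul_sum]
  refine sum_congr rfl fun i hi => ?_
  have hi' := mem_range.1 hi
  rw [sum_eq_single_of_mem i hi]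
  · rw [smul_mul_smul_comm, spectralIdempotent_mul_spectralIdempotent hζ ht hi' hi', if_pos rfl]
    rfl
  · intro j hj hji
    rw [smul_mul_smul_comm, spectralIdempotent_mul_spectralIdempotent hζ ht hi' (mem_range.1 hj),
      if_neg hji.symm, smul_zero]

lemma spectralSum_one (hζ : IsPrimitiveRoot ζ N) : spectralSum ζ N t 1 = 1 := by
  simp only [spectralSum, Pi.one_apply, one_smul, sum_spectralIdempotent hζ]

lemma spectralSum_pow (hζ : IsPrimitiveRoot ζ N) (ht : t ^ N = 1) (f : ℕ → K) (M : ℕ) :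
    spectralSum ζ N t f ^ M = spectralSum ζ N t (f ^ M) := by
  induction M with
  | zero => rw [pow_zero, pow_zero, spectralSum_one hζ]
  | succ M ih => rw [pow_succ, ih, spectralSum_mul hζ ht, pow_succ]

lemma spectralSum_pow_eq_self (hζ : IsPrimitiveRoot ζ N) (ht : t ^ N = 1) :
    spectralSum ζ N t (ζ ^ ·) = t := by
  simp only [spectralSum, ← mul_spectralIdempotent hζ ht, ← mul_sum, sum_spectralIdempotent hζ,
    mul_one]

lemma Commute.spectralSum {x : A} (h : Commute x t) (ζ : K) (N : ℕ) (f : ℕ → K) :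
    Commute x (spectralSum ζ N t f) :=
  .sum_right _ _ _ fun _ _ => .smul_right (.smul_right (.sum_right _ _ _ fun k _ =>
    (h.smul_right _).pow_right k) _) _

lemma map_spectralSum {B : Type*} [Ring B] [Algebra K B] (φ : A →ₐ[K] B) (ζ : K) (N : ℕ)
    (f : ℕ → K) : φ (spectralSum ζ N t f) = spectralSum ζ N (φ t) f := by
  simp [spectralSum, spectralIdempotent, map_sum, map_smul, map_pow]

end SpectralDecomposition

section SpectralRoot

variable {K A : Type*} [Field K] [Ring A] [Algebra K A] {M N : ℕ} [NeZero M] [NeZero N] {ξ : K}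
  {t : A}

/-- `ξ ^ j` is an `M`-th root of the eigenvalue `(ξ ^ M) ^ j` of `t`. -/
def spectralRoot (ξ : K) (M N : ℕ) (t : A) : A :=
  spectralSum (ξ ^ M) N t (ξ ^ ·)

lemma spectralRoot_pow (hξ : IsPrimitiveRoot ξ (M * N)) (ht : t ^ N = 1) :
    spectralRoot ξ M N t ^ M = t := by
  have hζ : IsPrimitiveRoot (ξ ^ M) N := hξ.pow (NeZero.pos _) rfl
  rw [spectralRoot, spectralSum_pow hζ ht]
  convert spectralSum_pow_eq_self hζ ht using 2
  ext j
  simp only [Pi.pow_apply, ← pow_mul, mul_comm]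

lemma isUnit_spectralRoot (hξ : IsPrimitiveRoot ξ (M * N)) (ht : t ^ N = 1) :
    IsUnit (spectralRoot ξ M N t) :=
  .of_pow_eq_one (by rw [pow_mul, spectralRoot_pow hξ ht, ht]) (NeZero.ne _)

end SpectralRoot

lemma Units.val_pow_eq_one {M : Type*} [Monoid M] {t : Mˣ} {N : ℕ} (ht : t ^ N = 1) :
    (t : M) ^ N = 1 := by
  rw [← Units.val_pow_eq_pow_val, ht, Units.val_one]

section SpectralRootUnit

variable {A B : Type*} [Ring A] [Algebra ℂ A] [Ring B] [Algebra ℂ B] (M : ℕ) {N : ℕ} [NeZero M]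
  [NeZero N]

noncomputable def spectralRootUnit {t : Aˣ} (ht : t ^ N = 1) : Aˣ :=
  (isUnit_spectralRoot (Complex.isPrimitiveRoot_exp (M * N) (NeZero.ne _))
    (Units.val_pow_eq_one ht)).unit

lemma val_spectralRootUnit {t : Aˣ} (ht : t ^ N = 1) :
    (spectralRootUnit M ht : A) =
      spectralRoot (Complex.exp (2 * Real.pi * Complex.I / ↑(M * N))) M N (t : A) :=
  IsUnit.unit_spec _

lemma spectralRootUnit_pow {t : Aˣ} (ht : t ^ N = 1) : spectralRootUnit M ht ^ M = t :=
  Units.ext <| by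
    rw [Units.val_pow_eq_pow_val, val_spectralRootUnit,
      spectralRoot_pow (Complex.isPrimitiveRoot_exp (M * N) (NeZero.ne _)) (Units.val_pow_eq_one ht)]

lemma Commute.spectralRootUnit {x t : Aˣ} (h : Commute x t) (ht : t ^ N = 1) :
    Commute x (spectralRootUnit M ht) :=
  .units_of_val <| by
    rw [val_spectralRootUnit]
    exact h.units_val.spectralSum _ _ _

lemma map_spectralRootUnit (φ : A →ₐ[ℂ] B) {t : Aˣ} {t' : Bˣ} (ht : t ^ N = 1)
    (ht' : t' ^ N = 1) (h : Units.map φ t = t') :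
    Units.map φ (spectralRootUnit M ht) = spectralRootUnit M ht' :=
  Units.ext <| by
    rw [Units.coe_map, val_spectralRootUnit, val_spectralRootUnit, ← h]
    exact map_spectralSum φ _ _ _

end SpectralRootUnit

section CommutatorRelations

variable {G : Type*} [Group G] {a b c u : G}

def CommutatorRels (a b c : G) : Prop :=
  b⁻¹ * a⁻¹ * b * a = c ∧ c⁻¹ * a⁻¹ * c * a = (c ^ 2)⁻¹ ∧ c⁻¹ * b⁻¹ * c * b = (c ^ 2)⁻¹

namespace CommutatorRels

lemma inv_mul_mul_mid (h : CommutatorRels a b c) : a⁻¹ * b * a = b * c := by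
  rw [← h.1]; group

lemma inv_mul_mul_right (h : CommutatorRels a b c) : a⁻¹ * c * a = c⁻¹ := by
  calc a⁻¹ * c * a = c * (c⁻¹ * a⁻¹ * c * a) := by group
    _ = c⁻¹ := by rw [h.2.1]; group

lemma commute_sq_mid (h : CommutatorRels a b c) : Commute (a ^ 2) b := by
  have hb : a⁻¹ * (a⁻¹ * b * a) * a = b := by
    calc a⁻¹ * (a⁻¹ * b * a) * a = a⁻¹ * (b * c) * a := by rw [h.inv_mul_mul_mid]
      _ = (a⁻¹ * b * a) * (a⁻¹ * c * a) := by group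
      _ = b := by rw [h.inv_mul_mul_mid, h.inv_mul_mul_right]; group
  show a ^ 2 * b = b * a ^ 2
  rw [sq]
  conv_lhs => rw [← hb]
  group

lemma commute_sq_right (h : CommutatorRels a b c) : Commute (a ^ 2) c := by
  have hc : a⁻¹ * (a⁻¹ * c * a) * a = c := by
    calc a⁻¹ * (a⁻¹ * c * a) * a = (a⁻¹ * c⁻¹ * a) := by rw [h.inv_mul_mul_right]
      _ = (a⁻¹ * c * a)⁻¹ := by group
      _ = c := by rw [h.inv_mul_mul_right, inv_inv]
  show a ^ 2 * c = c * a ^ 2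
  rw [sq]
  conv_lhs => rw [← hc]
  group

lemma commute_pow_of_even (h : CommutatorRels a b c) {k : ℕ} (hk : Even k) :
    Commute (a ^ k) b ∧ Commute (a ^ k) c := by
  obtain ⟨r, rfl⟩ := hk
  rw [← two_mul, pow_mul]
  exact ⟨h.commute_sq_mid.pow_left r, h.commute_sq_right.pow_left r⟩

lemma mul_right (h : CommutatorRels a b c) (hua : Commute u a) (huc : Commute u c) :
    CommutatorRels a (b * u) c := by
  refine ⟨?_, h.2.1, ?_⟩
  · calc (b * u)⁻¹ * a⁻¹ * (b * u) * a = u⁻¹ * (b⁻¹ * a⁻¹ * b) * (u * a) := by group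
      _ = u⁻¹ * (b⁻¹ * a⁻¹ * b * a) * u := by rw [hua.eq]; group
      _ = c := by rw [h.1, huc.inv_mul_cancel]
  · calc c⁻¹ * (b * u)⁻¹ * c * (b * u) = (c⁻¹ * u⁻¹) * (b⁻¹ * c * b) * u := by group
      _ = u⁻¹ * (c⁻¹ * b⁻¹ * c * b) * u := by rw [← huc.inv_inv.eq]; group
      _ = (c ^ 2)⁻¹ := by rw [h.2.2, ((huc.pow_right 2).inv_right).inv_mul_cancel]

end CommutatorRels

end CommutatorRelations

section Presentations

variable {G : Type*} [Group G] {n m l : ℕ}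

lemma forall_grels_iff (v : Fin 3 → G) :
    (∀ r ∈ grels n m l, FreeGroup.lift v r = 1) ↔
      v 0 ^ 2 ^ n = 1 ∧ v 1 ^ 2 ^ m = 1 ∧ v 2 ^ 2 ^ l = 1 ∧ CommutatorRels (v 0) (v 1) (v 2) := by
  simp [grels, CommutatorRels, mul_eq_one_iff_eq_inv]

lemma forall_hrels_iff (v : Fin 3 → G) :
    (∀ r ∈ hrels n m l, FreeGroup.lift v r = 1) ↔
      v 0 ^ 2 ^ n = 1 ∧ v 1 ^ 2 ^ m = v 0 ^ 2 ^ m ∧ v 2 ^ 2 ^ l = 1 ∧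
        CommutatorRels (v 0) (v 1) (v 2) := by
  simp [hrels, CommutatorRels, mul_eq_one_iff_eq_inv]

lemma lift_comp_of_eq_one {α : Type*} {rels : Set (FreeGroup α)} (f : PresentedGroup rels →* G)
    {r : FreeGroup α} (hr : r ∈ rels) : FreeGroup.lift (f ∘ PresentedGroup.of) r = 1 := by
  have hlift : FreeGroup.lift (f ∘ PresentedGroup.of) = f.comp (PresentedGroup.mk rels) :=
    FreeGroup.ext_hom _ _ fun _ => FreeGroup.lift_apply_of
  rw [hlift, MonoidHom.comp_apply, PresentedGroup.one_of_mem hr, map_one]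

end Presentations

section Twist

variable {G : Type*} [Group G] {n m l : ℕ} {v : Fin 3 → G} {u : G}

lemma forall_hrels_of_forall_grels (hv : ∀ r ∈ grels n m l, FreeGroup.lift v r = 1)
    (hm : m ≠ 0) (hu : ∀ x, Commute x (v 0 ^ 2 ^ m) → Commute x u)
    (hum : u ^ 2 ^ m = v 0 ^ 2 ^ m) :
    ∀ r ∈ hrels n m l, FreeGroup.lift ![v 0, v 1 * u, v 2] r = 1 := by
  obtain ⟨h0, h1, h2, h⟩ := (forall_grels_iff v).1 hv
  have hcomm := h.commute_pow_of_even ((Nat.even_pow' hm).2 even_two)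
  refine (forall_hrels_iff _).2 ⟨h0, ?_, h2, h.mul_right ?_ ?_⟩
  · show (v 1 * u) ^ 2 ^ m = v 0 ^ 2 ^ m
    rw [(hu _ hcomm.1.symm).mul_pow, h1, one_mul, hum]
  · exact (hu _ ((Commute.refl _).pow_right _)).symm
  · exact (hu _ hcomm.2.symm).symm

lemma forall_grels_of_forall_hrels (hv : ∀ r ∈ hrels n m l, FreeGroup.lift v r = 1)
    (hm : m ≠ 0) (hu : ∀ x, Commute x (v 0 ^ 2 ^ m) → Commute x u)
    (hum : u ^ 2 ^ m = v 0 ^ 2 ^ m) :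
    ∀ r ∈ grels n m l, FreeGroup.lift ![v 0, v 1 * u⁻¹, v 2] r = 1 := by
  obtain ⟨h0, h1, h2, h⟩ := (forall_hrels_iff v).1 hv
  have hcomm := h.commute_pow_of_even ((Nat.even_pow' hm).2 even_two)
  refine (forall_grels_iff _).2 ⟨h0, ?_, h2, h.mul_right ?_ ?_⟩
  · show (v 1 * u⁻¹) ^ 2 ^ m = 1
    rw [(hu _ hcomm.1.symm).inv_right.mul_pow, h1, inv_pow, hum, mul_inv_cancel]
  · exact (hu _ ((Commute.refl _).pow_right _)).symm.inv_left
  · exact (hu _ hcomm.2.symm).symm.inv_left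

end Twist

lemma pow_pow_eq_one_of_pow_eq_one {M : Type*} [Monoid M] {x : M} {N : ℕ} (hx : x ^ N = 1)
    (k : ℕ) : (x ^ k) ^ N = 1 := by
  rw [pow_right_comm, hx, one_pow]

section GroupAlgebra

variable {k K A : Type*} [CommSemiring k] [Group K] [Semiring A] [Algebra k A]

lemma units_map_lift_toHomUnits (φ : K →* Aˣ) (g : K) :
    Units.map (MonoidAlgebra.lift k A K ((Units.coeHom A).comp φ) : MonoidAlgebra k K →* A)
      ((MonoidAlgebra.of k K).toHomUnits g) = φ g :=
  Units.ext (MonoidAlgebra.lift_of _ _)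

lemma comp_lift_eq_id (φ : K →* Aˣ) (ψ : A →ₐ[k] MonoidAlgebra k K)
    (h : (Units.map (ψ : A →* MonoidAlgebra k K)).comp φ = (MonoidAlgebra.of k K).toHomUnits) :
    ψ.comp (MonoidAlgebra.lift k A K ((Units.coeHom A).comp φ)) = AlgHom.id k _ := by
  refine MonoidAlgebra.algHom_ext (fun g => ?_) (Subsingleton.elim _ _)
  simpa [MonoidAlgebra.lift_single] using congrArg Units.val (DFunLike.congr_fun h g)

end GroupAlgebra

section Isomorphism

variable (n m l : ℕ) (hm : m ≠ 0)

local notation "𝔾" => PresentedGroup (grels n m l)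
local notation "ℍ" => PresentedGroup (hrels n m l)

noncomputable def rootG : (MonoidAlgebra ℂ 𝔾)ˣ :=
  spectralRootUnit (2 ^ m) <| pow_pow_eq_one_of_pow_eq_one
    ((forall_grels_iff ((MonoidAlgebra.of ℂ 𝔾).toHomUnits ∘ PresentedGroup.of)).1
      fun _ => lift_comp_of_eq_one _).1 (2 ^ m)

noncomputable def rootH : (MonoidAlgebra ℂ ℍ)ˣ :=
  spectralRootUnit (2 ^ m) <| pow_pow_eq_one_of_pow_eq_one
    ((forall_hrels_iff ((MonoidAlgebra.of ℂ ℍ).toHomUnits ∘ PresentedGroup.of)).1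
      fun _ => lift_comp_of_eq_one _).1 (2 ^ m)

noncomputable def gToUnitsH : 𝔾 →* (MonoidAlgebra ℂ ℍ)ˣ :=
  PresentedGroup.toGroup <| forall_grels_of_forall_hrels (u := rootH n m l)
    (fun _ => lift_comp_of_eq_one _) hm (fun _ hx => hx.spectralRootUnit _ _)
    (spectralRootUnit_pow _ _)

noncomputable def hToUnitsG : ℍ →* (MonoidAlgebra ℂ 𝔾)ˣ :=
  PresentedGroup.toGroup <| forall_hrels_of_forall_grels (u := rootG n m l)
    (fun _ => lift_comp_of_eq_one _) hm (fun _ hx => hx.spectralRootUnit _ _)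
    (spectralRootUnit_pow _ _)

noncomputable def algGToH : MonoidAlgebra ℂ 𝔾 →ₐ[ℂ] MonoidAlgebra ℂ ℍ :=
  MonoidAlgebra.lift ℂ _ 𝔾 ((Units.coeHom _).comp (gToUnitsH n m l hm))

noncomputable def algHToG : MonoidAlgebra ℂ ℍ →ₐ[ℂ] MonoidAlgebra ℂ 𝔾 :=
  MonoidAlgebra.lift ℂ _ ℍ ((Units.coeHom _).comp (hToUnitsG n m l hm))

lemma units_map_algHToG_of (g : ℍ) :
    Units.map (algHToG n m l hm : _ →* _) ((MonoidAlgebra.of ℂ ℍ).toHomUnits g) =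
      hToUnitsG n m l hm g :=
  units_map_lift_toHomUnits _ _

lemma units_map_algGToH_of (g : 𝔾) :
    Units.map (algGToH n m l hm : _ →* _) ((MonoidAlgebra.of ℂ 𝔾).toHomUnits g) =
      gToUnitsH n m l hm g :=
  units_map_lift_toHomUnits _ _

lemma units_map_algHToG_rootH :
    Units.map (algHToG n m l hm : _ →* _) (rootH n m l) = rootG n m l :=
  map_spectralRootUnit _ _ _ _ <| by
    rw [map_pow, Function.comp_apply, units_map_algHToG_of, hToUnitsG, PresentedGroup.toGroup.of]
    rfl

lemma units_map_algGToH_rootG :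
    Units.map (algGToH n m l hm : _ →* _) (rootG n m l) = rootH n m l :=
  map_spectralRootUnit _ _ _ _ <| by
    rw [map_pow, Function.comp_apply, units_map_algGToH_of, gToUnitsH, PresentedGroup.toGroup.of]
    rfl

lemma algHToG_comp_algGToH : (algHToG n m l hm).comp (algGToH n m l hm) = AlgHom.id ℂ _ := by
  refine comp_lift_eq_id _ _ (PresentedGroup.ext fun i => ?_)
  fin_cases i <;>
    simp only [MonoidHom.comp_apply, gToUnitsH, hToUnitsG, PresentedGroup.toGroup.of,
      Fin.zero_eta, Fin.mk_one, Fin.reduceFinMk, Matrix.cons_val, Function.comp_apply, map_mul,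
      map_inv, units_map_algHToG_of, units_map_algHToG_rootH, mul_inv_cancel_right]

lemma algGToH_comp_algHToG : (algGToH n m l hm).comp (algHToG n m l hm) = AlgHom.id ℂ _ := by
  refine comp_lift_eq_id _ _ (PresentedGroup.ext fun i => ?_)
  fin_cases i <;>
    simp only [MonoidHom.comp_apply, gToUnitsH, hToUnitsG, PresentedGroup.toGroup.of,
      Fin.zero_eta, Fin.mk_one, Fin.reduceFinMk, Matrix.cons_val, Function.comp_apply, map_mul,
      units_map_algGToH_of, units_map_algGToH_rootG, inv_mul_cancel_right]

noncomputable def algEquivGH : MonoidAlgebra ℂ 𝔾 ≃ₐ[ℂ] MonoidAlgebra ℂ ℍ :=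
  .ofAlgHom _ _ (algGToH_comp_algHToG n m l hm) (algHToG_comp_algGToH n m l hm)

end Isomorphism

theorem stmt3_general (n m l : ℕ) (h2 : m > l) :
    Nonempty (MonoidAlgebra ℂ (GrpG n m l) ≃ₐ[ℂ] MonoidAlgebra ℂ (GrpH n m l)) :=
  ⟨algEquivGH n m l (by omega)⟩

theorem stmt3 (n m l : ℕ) (h1 : n > m) (h2 : m > l) (h3 : 2 ≤ l) :
    Nonempty (MonoidAlgebra ℂ (GrpG n m l) ≃ₐ[ℂ] MonoidAlgebra ℂ (GrpH n m l)) :=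
  stmt3_general n m l h2
end

section
/- Let S be a commutative ring with an ideal n and let G be a finite group. Write F = S/n, let π : S → F be the natural projection, and let π̂ : SG → FG be the induced ring homomorphism on group algebras (applying π to each coefficient). Then Δ(SG) ∩ π̂⁻¹(Δ(FG)²) = nΔ(SG) + Δ(SG)², where Δ(SG) denotes the augmentation ideal of SG. -/
/-!
The coefficientwise projection `π̂ : SG → FG` is surjective with kernel `nSG` and maps the
generators `g - 1` of `Δ(SG)` onto those of `Δ(FG)`, so `π̂⁻¹(Δ(FG)²) = Δ(SG)² + nSG`.
By the modular law the left-hand side is then `Δ(SG)² + (nSG ∩ Δ(SG))`, and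
`nSG ∩ Δ(SG) = nΔ(SG)` because every `x ∈ Δ(SG)` equals `Σ_g x_g (g - 1)`.
-/

/-- The augmentation map `ε : SG → S`, sending `Σ α_g g` to `Σ α_g`. -/
noncomputable def aug (S : Type) [CommRing S] (G : Type) [Group G] :
    MonoidAlgebra S G →ₐ[S] S := MonoidAlgebra.lift S S G 1

/-- The augmentation ideal `Δ(SG) = ker ε`. -/
noncomputable def augIdeal (S : Type) [CommRing S] (G : Type) [Group G] :
    Ideal (MonoidAlgebra S G) := RingHom.ker (aug S G)

/-- The homomorphism `π̂ : SG → (S/n)G` applying the projection `π : S → S/n`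
to each coefficient. -/
noncomputable def coeffProj (S : Type) [CommRing S] (nn : Ideal S) (G : Type) [Group G] :
    MonoidAlgebra S G →ₐ[S] MonoidAlgebra (S ⧸ nn) G :=
  MonoidAlgebra.lift S (MonoidAlgebra (S ⧸ nn) G) G (MonoidAlgebra.of (S ⧸ nn) G)

namespace Ideal

variable {R S F : Type*} [Semiring R] [Semiring S] [FunLike F R S] [RingHomClass F R S] {f : F}

-- `Ideal.map_mul` needs a commutative codomain, and group algebras of nonabelian groups are not.
theorem map_mul_of_surjective (hf : Function.Surjective f) (I J : Ideal R) :
    map f (I * J) = map f I * map f J := by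
  refine le_antisymm (map_le_iff_le_comap.2 <| mul_le.2 fun r hr s hs => ?_)
    (mul_le.2 fun y hy z hz => ?_)
  · rw [mem_comap, map_mul]
    exact mul_mem_mul (mem_map_of_mem f hr) (mem_map_of_mem f hs)
  · obtain ⟨r, hr, rfl⟩ := (mem_map_iff_of_surjective f hf).1 hy
    obtain ⟨s, hs, rfl⟩ := (mem_map_iff_of_surjective f hf).1 hz
    rw [← map_mul]
    exact mem_map_of_mem f (mul_mem_mul hr hs)

theorem map_pow_of_surjective (hf : Function.Surjective f) (I : Ideal R) (n : ℕ) :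
    map f (I ^ n) = map f I ^ n := by
  induction n with
  | zero => simp [Submodule.pow_zero, one_eq_top, map_top]
  | succ n ih => rw [Submodule.pow_succ, Submodule.pow_succ, map_mul_of_surjective hf, ih]

end Ideal

namespace MonoidAlgebra

variable {R : Type*} [CommRing R] {M : Type*} [Monoid M]

theorem mem_ker_mapRingHom_mk_iff (I : Ideal R) (x : MonoidAlgebra R M) :
    x ∈ RingHom.ker (mapRingHom M (Ideal.Quotient.mk I)) ↔ ∀ m, x.coeff m ∈ I := by
  simp [RingHom.mem_ker, ← coeff_eq_zero, Finsupp.ext_iff, Ideal.Quotient.eq_zero_iff_mem]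

theorem ker_mapRingHom_mk (I : Ideal R) :
    RingHom.ker (mapRingHom M (Ideal.Quotient.mk I)) =
      Ideal.map (algebraMap R (MonoidAlgebra R M)) I := by
  refine le_antisymm (fun x hx => ?_) (Ideal.map_le_iff_le_comap.2 fun a ha => ?_)
  · rw [mem_ker_mapRingHom_mk_iff] at hx
    rw [← sum_coeff_single x, Finsupp.sum]
    refine Ideal.sum_mem _ fun m _ => ?_
    rw [single_eq_algebraMap_mul_of, Algebra.commutes]
    exact Ideal.mul_mem_left _ _ (Ideal.mem_map_of_mem _ (hx m))
  · simp [RingHom.mem_ker, Ideal.Quotient.eq_zero_iff_mem.2 ha]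

theorem mem_map_algebraMap_iff (I : Ideal R) (x : MonoidAlgebra R M) :
    x ∈ Ideal.map (algebraMap R (MonoidAlgebra R M)) I ↔ ∀ m, x.coeff m ∈ I := by
  rw [← ker_mapRingHom_mk, mem_ker_mapRingHom_mk_iff]

end MonoidAlgebra

section Augmentation

variable (S : Type) [CommRing S] (G : Type) [Group G]

open MonoidAlgebra

theorem aug_single (g : G) (a : S) : aug S G (single g a) = a := by
  simp [aug, lift_single]

theorem of_sub_one_mem_augIdeal (g : G) : of S G g - 1 ∈ augIdeal S G := by
  simp [augIdeal, aug]

variable {S G} in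
theorem eq_sum_coeff_mul_of_sub_one {x : MonoidAlgebra S G} (hx : x ∈ augIdeal S G) :
    x = ∑ g ∈ x.coeff.support,
      algebraMap S (MonoidAlgebra S G) (x.coeff g) * (of S G g - 1) := by
  have hx_sum : x = ∑ g ∈ x.coeff.support, single g (x.coeff g) := (sum_coeff_single x).symm
  have haug : ∑ g ∈ x.coeff.support, x.coeff g = aug S G x := by
    conv_rhs => rw [hx_sum]
    simp only [map_sum, aug_single]
  simp only [mul_sub, mul_one, Finset.sum_sub_distrib, ← single_eq_algebraMap_mul_of, ← map_sum,
    haug, RingHom.mem_ker.1 hx, map_zero, sub_zero]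
  exact hx_sum

theorem augIdeal_eq_span :
    augIdeal S G = Ideal.span (Set.range fun g : G => of S G g - 1) := by
  refine le_antisymm (fun x hx => ?_) (Ideal.span_le.2 ?_)
  · rw [eq_sum_coeff_mul_of_sub_one hx]
    exact Ideal.sum_mem _ fun g _ => Ideal.mul_mem_left _ _ (Ideal.subset_span ⟨g, rfl⟩)
  · rintro _ ⟨g, rfl⟩
    exact of_sub_one_mem_augIdeal S G g

theorem map_algebraMap_inf_augIdeal (I : Ideal S) :
    Ideal.map (algebraMap S (MonoidAlgebra S G)) I ⊓ augIdeal S G =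
      Ideal.map (algebraMap S (MonoidAlgebra S G)) I * augIdeal S G := by
  refine le_antisymm ?_ ?_
  · intro x hx
    obtain ⟨hxI, hxΔ⟩ := Ideal.mem_inf.1 hx
    rw [mem_map_algebraMap_iff] at hxI
    rw [eq_sum_coeff_mul_of_sub_one hxΔ]
    exact Ideal.sum_mem _ fun g _ => Ideal.mul_mem_mul (Ideal.mem_map_of_mem _ (hxI g))
      (of_sub_one_mem_augIdeal S G g)
  · rw [← ker_mapRingHom_mk]
    exact Ideal.mul_le_inf

variable (nn : Ideal S)

theorem coeffProj_eq_mapRingHom :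
    (coeffProj S nn G : MonoidAlgebra S G →+* MonoidAlgebra (S ⧸ nn) G) =
      mapRingHom G (Ideal.Quotient.mk nn) := by
  ext <;> simp [coeffProj, Algebra.smul_def]

theorem coeffProj_surjective : Function.Surjective (coeffProj S nn G) := by
  rw [← AlgHom.coe_toRingHom, coeffProj_eq_mapRingHom, coe_mapRingHom]
  exact map_surjective _ Ideal.Quotient.mk_surjective

theorem ker_coeffProj :
    RingHom.ker (coeffProj S nn G) = Ideal.map (algebraMap S (MonoidAlgebra S G)) nn := by
  rw [← ker_mapRingHom_mk, ← coeffProj_eq_mapRingHom]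
  rfl

theorem map_coeffProj_augIdeal :
    Ideal.map (coeffProj S nn G) (augIdeal S G) = augIdeal (S ⧸ nn) G := by
  rw [augIdeal_eq_span, augIdeal_eq_span, Ideal.map_span, ← Set.range_comp]
  congr 1
  ext g
  simp [coeffProj]

end Augmentation

theorem stmt6_general (S : Type) [CommRing S] (nn : Ideal S) (G : Type) [Group G] :
    augIdeal S G ⊓ Ideal.comap (coeffProj S nn G) (augIdeal (S ⧸ nn) G ^ 2)
      = Ideal.map (algebraMap S (MonoidAlgebra S G)) nn * augIdeal S G + augIdeal S G ^ 2 := by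
  have hcomap : Ideal.comap (coeffProj S nn G) (augIdeal (S ⧸ nn) G ^ 2) =
      augIdeal S G ^ 2 ⊔ Ideal.map (algebraMap S (MonoidAlgebra S G)) nn := by
    rw [← map_coeffProj_augIdeal, ← Ideal.map_pow_of_surjective (coeffProj_surjective S G nn),
      Ideal.comap_map_of_surjective _ (coeffProj_surjective S G nn), ← RingHom.ker_eq_comap_bot,
      ker_coeffProj]
  rw [hcomap, inf_comm, sup_inf_assoc_of_le _ (Ideal.pow_le_self two_ne_zero),
    map_algebraMap_inf_augIdeal, sup_comm, Ideal.add_eq_sup]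

theorem stmt6 (S : Type) [CommRing S] (nn : Ideal S) (G : Type) [Group G] [Finite G] :
    augIdeal S G ⊓ Ideal.comap (coeffProj S nn G) (augIdeal (S ⧸ nn) G ^ 2)
      = Ideal.map (algebraMap S (MonoidAlgebra S G)) nn * augIdeal S G + augIdeal S G ^ 2 :=
  stmt6_general S nn G
end

section
/- Let S be a commutative ring with an ideal n and let G be a finite group. Write F = S/n and set Δ(SG : n) = {x ∈ SG : ε(x) ∈ n}, where ε : SG → S is the augmentation map. Then there is an isomorphism of F-modules Δ(SG : n)/Δ(SG : n)² ≅ n/n² ⊕ Δ(FG)/Δ(FG)², where Δ(FG) is the augmentation ideal of FG. -/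
/-- The relative augmentation ideal `Δ(SG : n) = ε⁻¹(n) = {x ∈ SG : ε(x) ∈ n}`. -/
noncomputable def relAugIdeal (S : Type) [CommRing S] (nn : Ideal S) (G : Type) [Group G] :
    Ideal (MonoidAlgebra S G) := Ideal.comap (aug S G) nn

/-- For ideals `J ≤ I` of an `S`-algebra `A`, the quotient `I/J` as an `S`-module
(more precisely `I/(I ∩ J)`). -/
abbrev modQuot (S : Type) [CommRing S] {A : Type} [Ring A] [Algebra S A] (I J : Ideal A) :=
  ↥(Submodule.restrictScalars S I) ⧸
    Submodule.comap (Submodule.restrictScalars S I).subtype (Submodule.restrictScalars S J)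

/-!
Write `ε` for the augmentation and `π : SG → FG` for reduction of coefficients modulo `n`.
The map `x ↦ (ε x, π x)` sends `Δ(SG : n)` onto `n × Δ(FG)` (lift `z ∈ Δ(FG)` to `w ∈ Δ(SG)`
and take `a + w`), and `Δ(SG : n)²` into `n² × Δ(FG)²`. Conversely, if `ε x ∈ n²` and
`π x = π d` with `d ∈ Δ(SG)²`, then `y = x - d - ε x` has augmentation `0` and all coefficients
in `n`, so `y = Σ y_g (g - 1) ∈ n · Δ(SG) ⊆ Δ(SG : n)²`. Hence the kernel of the induced map
onto `n/n² × Δ(FG)/Δ(FG)²` is exactly `Δ(SG : n)²`.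
-/

/- `SG` is noncommutative, so `Ideal.le_comap_pow` and `Ideal.map_pow` do not apply, and
`pow_two` does not either (`Ideal R` is not a monoid for noncommutative `R`). -/

namespace Ideal

variable {R A F : Type*} [Semiring R] [Semiring A] [FunLike F R A] [RingHomClass F R A] {f : F}

lemma pow_two_eq_mul (I : Ideal R) : I ^ 2 = I * I := by
  rw [Submodule.pow_succ, Submodule.pow_one]

lemma pow_two_le_comap_pow_two {I : Ideal R} {J : Ideal A} (h : I ≤ J.comap f) :
    I ^ 2 ≤ (J ^ 2).comap f := by
  rw [pow_two_eq_mul, pow_two_eq_mul, Submodule.mul_le]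
  intro x hx y hy
  rw [mem_comap, map_mul]
  exact Submodule.mul_mem_mul (h hx) (h hy)

lemma pow_two_le_map_pow_two (hf : Function.Surjective f) {I : Ideal R} {J : Ideal A}
    (h : J ≤ I.map f) : J ^ 2 ≤ (I ^ 2).map f := by
  rw [pow_two_eq_mul, pow_two_eq_mul, Submodule.mul_le]
  intro x hx y hy
  obtain ⟨a, ha, rfl⟩ := (mem_map_iff_of_surjective f hf).1 (h hx)
  obtain ⟨b, hb, rfl⟩ := (mem_map_iff_of_surjective f hf).1 (h hy)
  rw [← map_mul]
  exact mem_map_of_mem f (Submodule.mul_mem_mul ha hb)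

end Ideal

namespace MonoidAlgebra

section Augmentation

variable {R T : Type} [CommRing R] [CommRing T] {G : Type} [Group G]

@[simp]
lemma aug_single (g : G) (a : R) : aug R G (single g a) = a := by
  simp [aug, lift_single]

@[simp]
lemma aug_algebraMap (a : R) : aug R G (algebraMap R (MonoidAlgebra R G) a) = a :=
  (aug R G).commutes a

lemma mem_augIdeal {x : MonoidAlgebra R G} : x ∈ augIdeal R G ↔ aug R G x = 0 :=
  RingHom.mem_ker

lemma mem_relAugIdeal {nn : Ideal R} {x : MonoidAlgebra R G} :
    x ∈ relAugIdeal R nn G ↔ aug R G x ∈ nn :=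
  Ideal.mem_comap

lemma augIdeal_le_relAugIdeal (nn : Ideal R) : augIdeal R G ≤ relAugIdeal R nn G :=
  fun _ hx ↦ mem_relAugIdeal.2 (by rw [mem_augIdeal.1 hx]; exact nn.zero_mem)

lemma sub_algebraMap_aug_eq_sum (x : MonoidAlgebra R G) :
    x - algebraMap R _ (aug R G x) = x.coeff.sum fun g a ↦ a • (of R G g - 1) := by
  conv_lhs => rw [← sum_coeff_single x]
  simp [Finsupp.sum, map_sum, smul_sub, Algebra.algebraMap_eq_smul_one]

lemma aug_mapRingHom (f : R →+* T) (x : MonoidAlgebra R G) :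
    aug T G (mapRingHom G f x) = f (aug R G x) := by
  induction x using induction_linear with
  | zero => simp
  | add x y hx hy => simp [hx, hy]
  | single g a => simp

lemma map_augIdeal {f : R →+* T} (hf : Function.Surjective f) :
    (augIdeal R G).map (mapRingHom G f) = augIdeal T G := by
  refine le_antisymm (Ideal.map_le_iff_le_comap.2 fun x hx ↦ ?_) fun z hz ↦ ?_
  · simp [Ideal.mem_comap, mem_augIdeal, aug_mapRingHom, mem_augIdeal.1 hx]
  have hsurj : Function.Surjective (mapRingHom G f) := map_surjective f.toAddMonoidHom hf
  obtain ⟨w, rfl⟩ := hsurj z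
  refine (Ideal.mem_map_iff_of_surjective _ hsurj).2
    ⟨w - algebraMap R _ (aug R G w), by simp [mem_augIdeal], ?_⟩
  simp [← aug_mapRingHom, mem_augIdeal.1 hz]

end Augmentation

section Reduction

variable {S : Type} [CommRing S] {nn : Ideal S} {G : Type} [Group G]

local notation "π" => mapRingHom G (Ideal.Quotient.mk nn)

lemma mem_relAugIdeal_sq_of_mapRingHom_eq_zero {x : MonoidAlgebra S G} (hπ : π x = 0)
    (haug : aug S G x = 0) : x ∈ relAugIdeal S nn G ^ 2 := by
  have hcoeff (g : G) : x.coeff g ∈ nn := by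
    rw [← Ideal.Quotient.eq_zero_iff_mem, ← coeff_mapRingHom, hπ, coeff_zero, Finsupp.zero_apply]
  have hx : x = x.coeff.sum fun g a ↦ algebraMap S _ a * (of S G g - 1) := by
    simpa [haug, Algebra.smul_def] using sub_algebraMap_aug_eq_sum x
  rw [hx, Ideal.pow_two_eq_mul]
  refine Submodule.finsuppSum_mem _ _ _ _ fun g _ ↦ Ideal.mul_mem_mul ?_ ?_
  · simpa [mem_relAugIdeal] using hcoeff g
  · exact augIdeal_le_relAugIdeal nn (mem_augIdeal.2 (by simp [of_apply]))

lemma relAugIdeal_le_comap_augIdeal :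
    relAugIdeal S nn G ≤ (augIdeal (S ⧸ nn) G).comap π := fun x hx ↦ by
  rw [Ideal.mem_comap, mem_augIdeal, aug_mapRingHom, Ideal.Quotient.eq_zero_iff_mem]
  exact mem_relAugIdeal.1 hx

lemma mem_relAugIdeal_sq_iff {x : MonoidAlgebra S G} :
    x ∈ relAugIdeal S nn G ^ 2 ↔ aug S G x ∈ nn ^ 2 ∧ π x ∈ augIdeal (S ⧸ nn) G ^ 2 := by
  refine ⟨fun hx ↦ ⟨?_, ?_⟩, fun ⟨haug, hπ⟩ ↦ ?_⟩
  · exact Ideal.pow_two_le_comap_pow_two (f := aug S G) (J := nn) le_rfl hx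
  · exact Ideal.pow_two_le_comap_pow_two relAugIdeal_le_comap_augIdeal hx
  have hsurj : Function.Surjective π := map_surjective _ Ideal.Quotient.mk_surjective
  obtain ⟨d, hd, hπd⟩ := (Ideal.mem_map_iff_of_surjective _ hsurj).1 <|
    Ideal.pow_two_le_map_pow_two hsurj (map_augIdeal Ideal.Quotient.mk_surjective).ge hπ
  have hscalar : algebraMap S _ (aug S G x) ∈ relAugIdeal S nn G ^ 2 := by
    refine Ideal.pow_two_le_comap_pow_two (f := algebraMap S (MonoidAlgebra S G)) (I := nn)
      (fun a ha ↦ ?_) haug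
    rw [Ideal.mem_comap, mem_relAugIdeal, aug_algebraMap]
    exact ha
  have hrest : x - d - algebraMap S _ (aug S G x) ∈ relAugIdeal S nn G ^ 2 := by
    refine mem_relAugIdeal_sq_of_mapRingHom_eq_zero ?_ ?_
    · have hx : aug S G x ∈ nn := Ideal.pow_le_self two_ne_zero haug
      simp [hπd, Ideal.Quotient.eq_zero_iff_mem.2 hx]
    · rw [map_sub, map_sub, aug_algebraMap, mem_augIdeal.1 (Ideal.pow_le_self two_ne_zero hd)]
      abel
  have hd' := Ideal.pow_right_mono (augIdeal_le_relAugIdeal nn) 2 hd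
  have hsum := add_mem (add_mem hrest hscalar) hd'
  rwa [sub_add_cancel, sub_add_cancel] at hsum

lemma exists_mem_relAugIdeal {a : S} (ha : a ∈ nn) {z : MonoidAlgebra (S ⧸ nn) G}
    (hz : z ∈ augIdeal (S ⧸ nn) G) : ∃ x ∈ relAugIdeal S nn G, aug S G x = a ∧ π x = z := by
  rw [← map_augIdeal Ideal.Quotient.mk_surjective,
    Ideal.mem_map_iff_of_surjective _ (map_surjective _ Ideal.Quotient.mk_surjective)] at hz
  obtain ⟨w, hw, rfl⟩ := hz
  have haug : aug S G (algebraMap S _ a + w) = a := by simp [mem_augIdeal.1 hw]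
  refine ⟨algebraMap S _ a + w, mem_relAugIdeal.2 (by rwa [haug]), haug, ?_⟩
  simp [Ideal.Quotient.eq_zero_iff_mem.2 ha]

end Reduction

section Cotangent

variable (S : Type) [CommRing S] (nn : Ideal S) (G : Type) [Group G]

lemma mapAlgHom_mkₐ_apply (x : MonoidAlgebra S G) :
    mapAlgHom G (Ideal.Quotient.mkₐ S nn) x = mapRingHom G (Ideal.Quotient.mk nn) x := rfl

noncomputable def relAugIdealToProd :
    (relAugIdeal S nn G).restrictScalars S →ₗ[S]
      modQuot S nn (nn ^ 2) × modQuot S (augIdeal (S ⧸ nn) G) (augIdeal (S ⧸ nn) G ^ 2) :=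
  (Submodule.mkQ _ ∘ₗ (aug S G).toLinearMap.restrict fun _ hx ↦ mem_relAugIdeal.1 hx).prod
    (Submodule.mkQ _ ∘ₗ (mapAlgHom G (Ideal.Quotient.mkₐ S nn)).toLinearMap.restrict fun _ hx ↦ by
      simpa only [Submodule.restrictScalars_mem, AlgHom.toLinearMap_apply, mapAlgHom_mkₐ_apply,
        Ideal.mem_comap] using relAugIdeal_le_comap_augIdeal hx)

lemma ker_relAugIdealToProd :
    LinearMap.ker (relAugIdealToProd S nn G) =
      ((relAugIdeal S nn G ^ 2).restrictScalars S).comap (Submodule.subtype _) := by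
  ext ⟨x, hx⟩
  simp only [relAugIdealToProd, LinearMap.ker_prod, Submodule.mem_inf, LinearMap.mem_ker,
    LinearMap.comp_apply, Submodule.mkQ_apply, Submodule.Quotient.mk_eq_zero, Submodule.mem_comap,
    Submodule.subtype_apply, Submodule.restrictScalars_mem]
  exact (mem_relAugIdeal_sq_iff (nn := nn) (G := G)).symm

lemma relAugIdealToProd_surjective : Function.Surjective (relAugIdealToProd S nn G) := by
  rintro ⟨u, v⟩
  obtain ⟨⟨a, ha⟩, rfl⟩ := Submodule.mkQ_surjective _ u
  obtain ⟨⟨z, hz⟩, rfl⟩ := Submodule.mkQ_surjective _ v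
  obtain ⟨x, hx, hxa, hxz⟩ := exists_mem_relAugIdeal ha hz
  exact ⟨⟨x, hx⟩, Prod.ext (congrArg Submodule.Quotient.mk (Subtype.ext hxa))
    (congrArg Submodule.Quotient.mk (Subtype.ext hxz))⟩

end Cotangent

end MonoidAlgebra

theorem stmt7_general (S : Type) [CommRing S] (nn : Ideal S) (G : Type) [Group G] :
    Nonempty (modQuot S (relAugIdeal S nn G) (relAugIdeal S nn G ^ 2) ≃ₗ[S]
      modQuot S nn (nn ^ 2) ×
        modQuot S (augIdeal (S ⧸ nn) G) (augIdeal (S ⧸ nn) G ^ 2)) :=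
  ⟨(Submodule.quotEquivOfEq _ _ (MonoidAlgebra.ker_relAugIdealToProd S nn G).symm).trans
    ((MonoidAlgebra.relAugIdealToProd S nn G).quotKerEquivOfSurjective
      (MonoidAlgebra.relAugIdealToProd_surjective S nn G))⟩

theorem stmt7 (S : Type) [CommRing S] (nn : Ideal S) (G : Type) [Group G] [Finite G] :
    Nonempty (modQuot S (relAugIdeal S nn G) (relAugIdeal S nn G ^ 2) ≃ₗ[S]
      modQuot S nn (nn ^ 2) ×
        modQuot S (augIdeal (S ⧸ nn) G) (augIdeal (S ⧸ nn) G ^ 2)) :=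
  stmt7_general S nn G
end
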